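/- For non-negative integers m, n and −1 < τ < 1, the scaled Hermite polynomials satisfy the two-dimensional orthogonality relation ∫_ℝ ∫_ℝ e^{-x²/(1+τ)} e^{-y²/(1−τ)} C_m(x+iy) C_n(x−iy) dx dy = π m! √(1−τ²) δ_{m,n}. -/

import Mathlib

/-! Let `F_{m,n} = w · C_m(z) C_n(z̄)`, with `w` the Gaussian weight, and `J_{m,n} = ∫ F_{m,n}`.
By the recurrence `z C_m = C_{m+1} + mτ C_{m-1}` and `C_m' = m C_{m-1}`, both `(1+τ) ∂ₓ F_{m,n}`
and `(1-τ) ∂ᵧ F_{m,n}` are linear combinations of the `F_{a,b}`. They integrate to zero, and the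
sum of the two resulting relations is `J_{m+1,n} = n J_{m,n-1}`, their difference
`J_{m,n+1} = m J_{m-1,n}`. Induction from the Gaussian integral `J_{0,0} = π √(1-τ²)` concludes. -/

open MeasureTheory Complex

/-- The monic scaled Hermite polynomial `C_n(z) = (τ/2)^{n/2} H_n(z/√(2τ))`, interpreted
  through its explicit polynomial coefficients (which are polynomial in `τ`):
  `C_n(z) = Σ_{k ≤ n/2} (-1)^k n!/(k!(n-2k)!) (τ/2)^k z^{n-2k}`. -/
noncomputable def C (τ : ℝ) (n : ℕ) (z : ℂ) : ℂ :=
  ∑ k ∈ Finset.range (n / 2 + 1),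
    (-1 : ℂ) ^ k * (n.factorial : ℂ) / ((k.factorial : ℂ) * ((n - 2 * k).factorial : ℂ)) *
      ((τ : ℂ) / 2) ^ k * z ^ (n - 2 * k)

open Finset

noncomputable def hermiteTerm (τ : ℝ) (n k : ℕ) (z : ℂ) : ℂ :=
  (-1 : ℂ) ^ k * (n.factorial : ℂ) / ((k.factorial : ℂ) * ((n - 2 * k).factorial : ℂ)) *
    ((τ : ℂ) / 2) ^ k * z ^ (n - 2 * k)

lemma C_eq_sum_hermiteTerm (τ : ℝ) (n : ℕ) (z : ℂ) :
    C τ n z = ∑ k ∈ range (n / 2 + 1), hermiteTerm τ n k z := rfl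

lemma hermiteTerm_zero (τ : ℝ) (n : ℕ) (z : ℂ) : hermiteTerm τ n 0 z = z ^ n := by
  simp [hermiteTerm, div_self, Nat.factorial_ne_zero]

lemma hermiteTerm_succ_succ (τ : ℝ) (z : ℂ) {n i : ℕ} (h : 2 * i + 1 ≤ n) :
    hermiteTerm τ (n + 2) (i + 1) z =
      z * hermiteTerm τ (n + 1) (i + 1) z - (n + 1) * τ * hermiteTerm τ n i z := by
  obtain ⟨j, rfl⟩ := Nat.exists_eq_add_of_le h
  rw [hermiteTerm, hermiteTerm, hermiteTerm, show 2 * i + 1 + j + 2 - 2 * (i + 1) = j + 1 by omega,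
    show 2 * i + 1 + j + 1 - 2 * (i + 1) = j by omega, show 2 * i + 1 + j - 2 * i = j + 1 by omega]
  simp only [Nat.factorial_succ]
  push_cast
  field_simp [Nat.factorial_ne_zero]
  ring

lemma hermiteTerm_top (τ : ℝ) (z : ℂ) (i : ℕ) :
    hermiteTerm τ (2 * i + 2) (i + 1) z = -(2 * i + 1) * τ * hermiteTerm τ (2 * i) i z := by
  rw [hermiteTerm, hermiteTerm, show 2 * i + 2 - 2 * (i + 1) = 0 by omega, Nat.sub_self]
  simp only [Nat.factorial_succ, show 2 * i + 2 = 2 * i + 1 + 1 by omega]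
  push_cast
  field_simp [Nat.factorial_ne_zero]
  ring

lemma sum_hermiteTerm_succ_succ (τ : ℝ) (z : ℂ) {n r : ℕ} (h : 2 * r ≤ n + 1) :
    ∑ i ∈ range r, hermiteTerm τ (n + 2) (i + 1) z =
      z * ∑ i ∈ range r, hermiteTerm τ (n + 1) (i + 1) z -
        (n + 1) * τ * ∑ i ∈ range r, hermiteTerm τ n i z := by
  rw [mul_sum, mul_sum, ← sum_sub_distrib]
  exact sum_congr rfl fun i hi => hermiteTerm_succ_succ τ z (by grind)

lemma C_succ_succ (τ : ℝ) (n : ℕ) (z : ℂ) :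
    C τ (n + 2) z = z * C τ (n + 1) z - (n + 1) * τ * C τ n z := by
  have hzero : hermiteTerm τ (n + 2) 0 z = z * hermiteTerm τ (n + 1) 0 z := by
    simp only [hermiteTerm_zero, pow_succ']
  obtain ⟨i, rfl | rfl⟩ := Nat.even_or_odd' n
  · rw [C_eq_sum_hermiteTerm, C_eq_sum_hermiteTerm, C_eq_sum_hermiteTerm,
      show (2 * i + 2) / 2 + 1 = i + 1 + 1 by omega, show (2 * i + 1) / 2 + 1 = i + 1 by omega,
      show 2 * i / 2 + 1 = i + 1 by omega, sum_range_succ' (hermiteTerm τ _ · z) (i + 1),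
      sum_range_succ (fun k => hermiteTerm τ _ (k + 1) z) i,
      sum_range_succ' (hermiteTerm τ _ · z) i,
      sum_range_succ (hermiteTerm τ _ · z) i, sum_hermiteTerm_succ_succ τ z (by omega), hzero,
      hermiteTerm_top]
    push_cast
    ring
  · rw [C_eq_sum_hermiteTerm, C_eq_sum_hermiteTerm, C_eq_sum_hermiteTerm,
      show (2 * i + 1 + 2) / 2 + 1 = i + 1 + 1 by omega,
      show (2 * i + 1 + 1) / 2 + 1 = i + 1 + 1 by omega, show (2 * i + 1) / 2 + 1 = i + 1 by omega,
      sum_range_succ' (hermiteTerm τ (2 * i + 1 + 2) · z),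
      sum_range_succ' (hermiteTerm τ (2 * i + 1 + 1) · z), sum_hermiteTerm_succ_succ τ z (by omega),
      hzero]
    ring

lemma C_zero (τ : ℝ) (z : ℂ) : C τ 0 z = 1 := by
  simp [C_eq_sum_hermiteTerm, hermiteTerm_zero]

lemma C_one (τ : ℝ) (z : ℂ) : C τ 1 z = z := by
  simp [C_eq_sum_hermiteTerm, hermiteTerm_zero]

lemma mul_C (τ : ℝ) (n : ℕ) (z : ℂ) :
    z * C τ n z = C τ (n + 1) z + n * τ * C τ (n - 1) z := by
  cases n with
  | zero => simp [C_zero, C_one]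
  | succ n => rw [C_succ_succ]; push_cast; ring

lemma hasDerivAt_C (τ : ℝ) (n : ℕ) (z : ℂ) : HasDerivAt (C τ n) (n * C τ (n - 1) z) z := by
  induction n using Nat.strong_induction_on generalizing z with
  | _ n ih =>
    match n with
    | 0 => simpa [funext (C_zero τ)] using hasDerivAt_const z (1 : ℂ)
    | 1 => simpa [funext (C_one τ), C_zero] using hasDerivAt_id' z
    | n + 2 =>
      have hrec := mul_C τ n z
      rw [funext (C_succ_succ τ n)]
      refine (((hasDerivAt_id' z).mul (ih (n + 1) (by omega) z)).sub
        ((ih n (by omega) z).const_mul (((n : ℂ) + 1) * τ))).congr_deriv ?_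
      push_cast
      linear_combination ((n : ℂ) + 1) * hrec

lemma norm_C_le (τ : ℝ) (n : ℕ) : ∃ K, 0 ≤ K ∧ ∀ z, ‖C τ n z‖ ≤ K * (1 + ‖z‖) ^ n := by
  refine ⟨∑ k ∈ range (n / 2 + 1),
    ‖(-1 : ℂ) ^ k * (n.factorial : ℂ) / ((k.factorial : ℂ) * ((n - 2 * k).factorial : ℂ)) *
      ((τ : ℂ) / 2) ^ k‖, by positivity, fun z => ?_⟩
  rw [C, sum_mul]
  refine (norm_sum_le _ _).trans (sum_le_sum fun k _ => ?_)
  rw [norm_mul, norm_pow]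
  gcongr
  calc ‖z‖ ^ (n - 2 * k) ≤ (1 + ‖z‖) ^ (n - 2 * k) := by gcongr; linarith
    _ ≤ (1 + ‖z‖) ^ n := pow_le_pow_right₀ (by simp) (Nat.sub_le _ _)

@[fun_prop]
lemma continuous_C (τ : ℝ) (n : ℕ) : Continuous (C τ n) :=
  continuous_iff_continuousAt.2 fun z => (hasDerivAt_C τ n z).continuousAt

lemma one_add_norm_le_mul (z : ℂ) : 1 + ‖z‖ ≤ (1 + |z.re|) * (1 + |z.im|) := by
  nlinarith [norm_le_abs_re_add_abs_im z, mul_nonneg (abs_nonneg z.re) (abs_nonneg z.im)]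

lemma integrable_abs_pow_mul_exp {a : ℝ} (ha : 0 < a) (k : ℕ) :
    Integrable fun x : ℝ => |x| ^ k * Real.exp (-x ^ 2 / a) := by
  have h := (integrable_rpow_mul_exp_neg_mul_sq (inv_pos.2 ha)
    (show (-1 : ℝ) < k by linarith [k.cast_nonneg (α := ℝ)])).norm
  refine h.congr (ae_of_all _ fun x => ?_)
  simp only [Real.rpow_natCast, norm_mul, norm_pow, Real.norm_eq_abs, Real.abs_exp]
  ring_nf

lemma integrable_one_add_abs_pow_mul_exp {a : ℝ} (ha : 0 < a) (N : ℕ) :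
    Integrable fun x : ℝ => (1 + |x|) ^ N * Real.exp (-x ^ 2 / a) := by
  simp_rw [add_comm (1 : ℝ), add_pow, one_pow, mul_one, sum_mul]
  exact integrable_finsetSum _ fun k _ =>
    ((integrable_abs_pow_mul_exp ha k).const_mul (N.choose k : ℝ)).congr
      (ae_of_all _ fun x => by ring)

lemma integrable_exp_mul_exp_mul {a b : ℝ} (ha : 0 < a) (hb : 0 < b) {g : ℝ × ℝ → ℂ}
    (hg : Continuous g) {K : ℝ} {N : ℕ}
    (hK : ∀ p : ℝ × ℝ, ‖g p‖ ≤ K * ((1 + |p.1|) * (1 + |p.2|)) ^ N) :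
    Integrable fun p : ℝ × ℝ => (Real.exp (-p.1 ^ 2 / a) * Real.exp (-p.2 ^ 2 / b) : ℂ) * g p := by
  have hmajorant : Integrable fun p : ℝ × ℝ => K * (((1 + |p.1|) ^ N * Real.exp (-p.1 ^ 2 / a)) *
      ((1 + |p.2|) ^ N * Real.exp (-p.2 ^ 2 / b))) := by
    rw [Measure.volume_eq_prod]
    exact ((integrable_one_add_abs_pow_mul_exp ha N).mul_prod
      (integrable_one_add_abs_pow_mul_exp hb N)).const_mul K
  refine hmajorant.mono' (by fun_prop) (ae_of_all _ fun p => ?_)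
  rw [norm_mul, norm_mul, norm_real, norm_real, Real.norm_of_nonneg (Real.exp_pos _).le,
    Real.norm_of_nonneg (Real.exp_pos _).le]
  calc _ ≤ Real.exp (-p.1 ^ 2 / a) * Real.exp (-p.2 ^ 2 / b) *
        (K * ((1 + |p.1|) * (1 + |p.2|)) ^ N) := by gcongr; exact hK p
    _ = _ := by rw [mul_pow]; ring

lemma integral_exp_neg_sq_div (a : ℝ) :
    ∫ x : ℝ, Real.exp (-x ^ 2 / a) = Real.sqrt (Real.pi * a) := by
  simp_rw [neg_div, div_eq_inv_mul, ← neg_mul, integral_gaussian, div_inv_eq_mul]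

lemma hasDerivAt_ofReal_exp_neg_sq_div (a x : ℝ) :
    HasDerivAt (fun t : ℝ => (Real.exp (-t ^ 2 / a) : ℂ))
      (-(2 * x) / a * Real.exp (-x ^ 2 / a)) x := by
  have h : HasDerivAt (fun t : ℝ => -t ^ 2 / a) (-(2 * x) / a) x := by
    simpa using ((hasDerivAt_pow 2 x).neg).div_const a
  convert h.exp.ofReal_comp using 1
  push_cast
  ring

section IntegrationByParts

variable {E : Type*} [NormedAddCommGroup E] [NormedSpace ℝ E] {f f' : ℝ × ℝ → E}

lemma integral_eq_zero_of_hasDerivAt_fst (hf : ∀ x y, HasDerivAt (fun t => f (t, y)) (f' (x, y)) x)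
    (hf' : Integrable f') (hfi : Integrable f) : ∫ p, f' p = 0 := by
  rw [Measure.volume_eq_prod] at hf' hfi ⊢
  rw [integral_prod_symm _ hf']
  refine integral_eq_zero_of_ae ?_
  filter_upwards [hf'.prod_left_ae, hfi.prod_left_ae] with y hf'y hfy
  exact integral_eq_zero_of_hasDerivAt_of_integrable (fun x => hf x y) hf'y hfy

lemma integral_eq_zero_of_hasDerivAt_snd (hf : ∀ x y, HasDerivAt (fun t => f (x, t)) (f' (x, y)) y)
    (hf' : Integrable f') (hfi : Integrable f) : ∫ p, f' p = 0 := by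
  rw [Measure.volume_eq_prod] at hf' hfi ⊢
  rw [integral_prod _ hf']
  refine integral_eq_zero_of_ae ?_
  filter_upwards [hf'.prod_right_ae, hfi.prod_right_ae] with x hf'x hfx
  exact integral_eq_zero_of_hasDerivAt_of_integrable (fun y => hf x y) hf'x hfx

end IntegrationByParts

noncomputable def hermiteIntegrand (τ : ℝ) (m n : ℕ) (p : ℝ × ℝ) : ℂ :=
  (Real.exp (-p.1 ^ 2 / (1 + τ)) * Real.exp (-p.2 ^ 2 / (1 - τ)) : ℂ) *
    C τ m ((p.1 : ℂ) + (p.2 : ℂ) * I) * C τ n ((p.1 : ℂ) - (p.2 : ℂ) * I)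

noncomputable def hermitePairing (τ : ℝ) (m n : ℕ) : ℂ := ∫ p, hermiteIntegrand τ m n p

section Pairing

variable {τ : ℝ}

lemma integrable_hermiteIntegrand (hτ0 : -1 < τ) (hτ1 : τ < 1) (m n : ℕ) :
    Integrable (hermiteIntegrand τ m n) := by
  obtain ⟨K, hK0, hK⟩ := norm_C_le τ m
  obtain ⟨L, hL0, hL⟩ := norm_C_le τ n
  have h := integrable_exp_mul_exp_mul (by linarith : 0 < 1 + τ) (by linarith : 0 < 1 - τ)
    (g := fun p : ℝ × ℝ => C τ m ((p.1 : ℂ) + (p.2 : ℂ) * I) * C τ n ((p.1 : ℂ) - (p.2 : ℂ) * I))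
    (by fun_prop) (K := K * L) (N := m + n) fun p => by
      rw [norm_mul, pow_add, mul_mul_mul_comm]
      gcongr
      · exact (hK _).trans (by gcongr; simpa using one_add_norm_le_mul ((p.1 : ℂ) + (p.2 : ℂ) * I))
      · exact (hL _).trans (by gcongr; simpa using one_add_norm_le_mul ((p.1 : ℂ) - (p.2 : ℂ) * I))
  exact h.congr (ae_of_all _ fun p => by simp only [hermiteIntegrand]; ring)

lemma hasDerivAt_hermiteIntegrand_fst (hτ0 : -1 < τ) (m n : ℕ) (x y : ℝ) :
    HasDerivAt (fun t => (1 + τ : ℂ) * hermiteIntegrand τ m n (t, y))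
      (m * hermiteIntegrand τ (m - 1) n (x, y) + n * hermiteIntegrand τ m (n - 1) (x, y) -
        hermiteIntegrand τ (m + 1) n (x, y) - hermiteIntegrand τ m (n + 1) (x, y)) x := by
  have hu : HasDerivAt (fun t : ℝ => C τ m (t + y * I)) (m * C τ (m - 1) (x + y * I)) x :=
    ((hasDerivAt_C τ m _).comp_add_const _ _).comp_ofReal
  have hv : HasDerivAt (fun t : ℝ => C τ n (t - y * I)) (n * C τ (n - 1) (x - y * I)) x := by
    simpa using ((hasDerivAt_C τ n _).comp (x : ℂ)
      ((hasDerivAt_id _).sub_const (y * I))).comp_ofReal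
  refine (((((hasDerivAt_ofReal_exp_neg_sq_div (1 + τ) x).mul_const
    (Real.exp (-y ^ 2 / (1 - τ)) : ℂ)).mul hu).mul hv).const_mul (1 + τ : ℂ)).congr_deriv ?_
  have hx : (1 + τ : ℂ) * (-(2 * x) / (1 + τ)) = -(2 * x) := by
    have : (1 + τ : ℂ) ≠ 0 := by exact_mod_cast (by linarith : (1 + τ) ≠ 0)
    field_simp
  simp only [hermiteIntegrand, Pi.mul_apply, ofReal_add, ofReal_one]
  linear_combination
    (-(Real.exp (-x ^ 2 / (1 + τ)) * Real.exp (-y ^ 2 / (1 - τ)) : ℂ) * C τ n (x - y * I)) *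
      mul_C τ m (x + y * I) +
    (-(Real.exp (-x ^ 2 / (1 + τ)) * Real.exp (-y ^ 2 / (1 - τ)) : ℂ) * C τ m (x + y * I)) *
      mul_C τ n (x - y * I) +
    ((Real.exp (-x ^ 2 / (1 + τ)) * Real.exp (-y ^ 2 / (1 - τ)) : ℂ) * C τ m (x + y * I) *
      C τ n (x - y * I)) * hx

lemma hasDerivAt_hermiteIntegrand_snd (hτ1 : τ < 1) (m n : ℕ) (x y : ℝ) :
    HasDerivAt (fun t => (1 - τ : ℂ) * hermiteIntegrand τ m n (x, t))
      (I * (hermiteIntegrand τ (m + 1) n (x, y) - hermiteIntegrand τ m (n + 1) (x, y) +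
        m * hermiteIntegrand τ (m - 1) n (x, y) - n * hermiteIntegrand τ m (n - 1) (x, y))) y := by
  have hu : HasDerivAt (fun t : ℝ => C τ m (x + t * I)) (m * C τ (m - 1) (x + y * I) * I) y := by
    simpa using ((hasDerivAt_C τ m _).comp (y : ℂ)
      (((hasDerivAt_id _).mul_const I).const_add (x : ℂ))).comp_ofReal
  have hv : HasDerivAt (fun t : ℝ => C τ n (x - t * I)) (n * C τ (n - 1) (x - y * I) * -I) y := by
    simpa using ((hasDerivAt_C τ n _).comp (y : ℂ)
      (((hasDerivAt_id _).mul_const I).const_sub (x : ℂ))).comp_ofReal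
  refine (((((hasDerivAt_ofReal_exp_neg_sq_div (1 - τ) y).const_mul
    (Real.exp (-x ^ 2 / (1 + τ)) : ℂ)).mul hu).mul hv).const_mul (1 - τ : ℂ)).congr_deriv ?_
  have hy : (1 - τ : ℂ) * (-(2 * y) / (1 - τ)) = -(2 * y) := by
    have : (1 - τ : ℂ) ≠ 0 := by exact_mod_cast (by linarith : (1 - τ) ≠ 0)
    field_simp
  simp only [hermiteIntegrand, Pi.mul_apply, ofReal_sub, ofReal_one]
  -- `-2y = I (z - z̄)` is where `I ^ 2 = -1` enters.
  linear_combination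
    (I * (Real.exp (-x ^ 2 / (1 + τ)) * Real.exp (-y ^ 2 / (1 - τ)) : ℂ) * C τ n (x - y * I)) *
      mul_C τ m (x + y * I) -
    (I * (Real.exp (-x ^ 2 / (1 + τ)) * Real.exp (-y ^ 2 / (1 - τ)) : ℂ) * C τ m (x + y * I)) *
      mul_C τ n (x - y * I) +
    ((Real.exp (-x ^ 2 / (1 + τ)) * Real.exp (-y ^ 2 / (1 - τ)) : ℂ) * C τ m (x + y * I) *
      C τ n (x - y * I)) * (hy - 2 * y * I_sq)

lemma hermitePairing_succ_add_succ (hτ0 : -1 < τ) (hτ1 : τ < 1) (m n : ℕ) :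
    hermitePairing τ (m + 1) n + hermitePairing τ m (n + 1) =
      m * hermitePairing τ (m - 1) n + n * hermitePairing τ m (n - 1) := by
  have hi := integrable_hermiteIntegrand hτ0 hτ1
  have h := integral_eq_zero_of_hasDerivAt_fst (hasDerivAt_hermiteIntegrand_fst hτ0 m n)
    (f := fun p => (1 + τ : ℂ) * hermiteIntegrand τ m n p)
    (f' := fun p => m * hermiteIntegrand τ (m - 1) n p + n * hermiteIntegrand τ m (n - 1) p -
      hermiteIntegrand τ (m + 1) n p - hermiteIntegrand τ m (n + 1) p) (by fun_prop) (by fun_prop)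
  rw [integral_sub (by fun_prop) (by fun_prop), integral_sub (by fun_prop) (by fun_prop),
    integral_add (by fun_prop) (by fun_prop), integral_const_mul, integral_const_mul] at h
  unfold hermitePairing
  linear_combination -h

lemma hermitePairing_succ_sub_succ (hτ0 : -1 < τ) (hτ1 : τ < 1) (m n : ℕ) :
    hermitePairing τ (m + 1) n - hermitePairing τ m (n + 1) =
      n * hermitePairing τ m (n - 1) - m * hermitePairing τ (m - 1) n := by
  have hi := integrable_hermiteIntegrand hτ0 hτ1
  have h := integral_eq_zero_of_hasDerivAt_snd (hasDerivAt_hermiteIntegrand_snd hτ1 m n)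
    (f := fun p => (1 - τ : ℂ) * hermiteIntegrand τ m n p)
    (f' := fun p => I * (hermiteIntegrand τ (m + 1) n p - hermiteIntegrand τ m (n + 1) p +
      m * hermiteIntegrand τ (m - 1) n p - n * hermiteIntegrand τ m (n - 1) p))
    (by fun_prop) (by fun_prop)
  rw [integral_const_mul, mul_eq_zero, or_iff_right I_ne_zero,
    integral_sub (by fun_prop) (by fun_prop), integral_add (by fun_prop) (by fun_prop),
    integral_sub (by fun_prop) (by fun_prop), integral_const_mul, integral_const_mul] at h
  unfold hermitePairing
  linear_combination h

lemma hermitePairing_succ_left (hτ0 : -1 < τ) (hτ1 : τ < 1) (m n : ℕ) :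
    hermitePairing τ (m + 1) n = n * hermitePairing τ m (n - 1) := by
  linear_combination (hermitePairing_succ_add_succ hτ0 hτ1 m n +
    hermitePairing_succ_sub_succ hτ0 hτ1 m n) / 2

lemma hermitePairing_succ_right (hτ0 : -1 < τ) (hτ1 : τ < 1) (m n : ℕ) :
    hermitePairing τ m (n + 1) = m * hermitePairing τ (m - 1) n := by
  linear_combination (hermitePairing_succ_add_succ hτ0 hτ1 m n -
    hermitePairing_succ_sub_succ hτ0 hτ1 m n) / 2

lemma hermitePairing_zero_zero (hτ0 : -1 < τ) :
    hermitePairing τ 0 0 = Real.pi * Real.sqrt (1 - τ ^ 2) := by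
  have hprod : ∫ p : ℝ × ℝ, Real.exp (-p.1 ^ 2 / (1 + τ)) * Real.exp (-p.2 ^ 2 / (1 - τ)) =
      Real.sqrt (Real.pi * (1 + τ)) * Real.sqrt (Real.pi * (1 - τ)) := by
    rw [Measure.volume_eq_prod, integral_prod_mul (fun x => Real.exp (-x ^ 2 / (1 + τ)))
      (fun y => Real.exp (-y ^ 2 / (1 - τ))), integral_exp_neg_sq_div, integral_exp_neg_sq_div]
  have hsqrt : Real.sqrt (Real.pi * (1 + τ)) * Real.sqrt (Real.pi * (1 - τ)) =
      Real.pi * Real.sqrt (1 - τ ^ 2) := by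
    rw [← Real.sqrt_mul (by nlinarith [Real.pi_pos]), show Real.pi * (1 + τ) * (Real.pi * (1 - τ)) =
      Real.pi ^ 2 * (1 - τ ^ 2) by ring, Real.sqrt_mul (by positivity), Real.sqrt_sq Real.pi_pos.le]
  simp only [hermitePairing, hermiteIntegrand, C_zero, mul_one]
  rw [← ofReal_mul, ← hsqrt, ← hprod, ← integral_complex_ofReal]
  simp only [ofReal_mul]

end Pairing

/-- two-dimensional orthogonality of the scaled Hermite polynomials. -/
theorem C_planar_orthogonality (τ : ℝ) (hτ0 : -1 < τ) (hτ1 : τ < 1) (m n : ℕ) :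
    (∫ p : ℝ × ℝ, (Real.exp (-p.1 ^ 2 / (1 + τ)) * Real.exp (-p.2 ^ 2 / (1 - τ)) : ℂ) *
        C τ m ((p.1 : ℂ) + (p.2 : ℂ) * I) * C τ n ((p.1 : ℂ) - (p.2 : ℂ) * I)) =
      if m = n then ((Real.pi : ℂ) * (m.factorial : ℂ) * (Real.sqrt (1 - τ ^ 2) : ℂ)) else 0 := by
  change hermitePairing τ m n = _
  induction m generalizing n with
  | zero =>
    cases n with
    | zero => simpa using hermitePairing_zero_zero hτ0
    | succ n => simp [hermitePairing_succ_right hτ0 hτ1]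
  | succ m ih =>
    cases n with
    | zero => simp [hermitePairing_succ_left hτ0 hτ1]
    | succ n =>
      rw [hermitePairing_succ_left hτ0 hτ1, Nat.add_sub_cancel, ih]
      simp only [Nat.add_right_cancel_iff]
      split_ifs with h
      · subst h; push_cast [Nat.factorial_succ]; ring
      · rw [mul_zero]
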